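/- Let d ≥ 1, λ ∈ (0,1), s_0 = (1/2)ln λ, ρ_λ = 2√λ/(1+λ), and ψ(s) = N(s)ρ_λ/d + (1/(d(1+λ)))∑_{i=1}^d (λe^{−s_i}+e^{s_i})1_{{s_i ≥ s_0}} with N(s) = #{i: s_i < s_0}. Define Λ*(x) = sup_{s∈ℝ^d}(⟨s,x⟩ − ln ψ(s)). Then for every x ∈ ℝ_+^d with ∑_{i=1}^d x_i ≤ 1, Λ*(x) = (1/2)(∑_{i=1}^d x_i) ln λ − ln ρ_λ + sup_{y∈ℝ_+^d}(⟨y,x⟩ − ln((1/(2d))∑_{i=1}^d (e^{−y_i}+e^{y_i}))). -/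

import Mathlib

/-!
Write `s₀ = ½ log λ` and `ρ = 2√λ/(1+λ)`. The function `ψ` is the average over the coordinates of
`psiTerm`, which is constant `ρ` below `s₀` and equals `(λe^{-t} + e^t)/(1+λ)` above it; the two
pieces agree at `s₀`, so `ψ(s) = ψ(max s s₀)`. Since `x ≥ 0`, replacing `s` by `max s s₀` can only
increase `⟨s, x⟩ - log ψ(s)`, so the supremum may be taken over `s = s₀ + y` with `y ≥ 0`, where
`ψ(s₀ + y) = ρ · (2d)⁻¹ ∑ (e^{-yᵢ} + e^{yᵢ})`. The remaining supremum is finite because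
`∑ xᵢ ≤ 1`.
-/

open scoped Classical in
/-- The function ψ from the LDP for the reflected biased random walk. -/
noncomputable def psi (d : ℕ) (lam : ℝ) (s : Fin d → ℝ) : ℝ :=
  ((Finset.univ.filter (fun i => s i < (1 / 2) * Real.log lam)).card : ℝ) *
      (2 * Real.sqrt lam / (1 + lam)) / d
    + (1 / (d * (1 + lam))) *
      ∑ i, (lam * Real.exp (-(s i)) + Real.exp (s i)) *
        (if (1 / 2) * Real.log lam ≤ s i then 1 else 0)

open Real

noncomputable def psiTerm (lam t : ℝ) : ℝ :=
  if t < 1 / 2 * log lam then 2 * √lam / (1 + lam)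
  else (lam * exp (-t) + exp t) / (1 + lam)

lemma psi_eq_sum_psiTerm_div (d : ℕ) (lam : ℝ) (s : Fin d → ℝ) :
    psi d lam s = (∑ i, psiTerm lam (s i)) / d := by
  rw [psi, Finset.card_filter]
  push_cast
  rw [Finset.sum_mul, Finset.sum_div, Finset.mul_sum, ← Finset.sum_add_distrib, Finset.sum_div]
  refine Finset.sum_congr rfl fun i _ => ?_
  by_cases h : s i < 1 / 2 * log lam
  · rw [psiTerm, if_pos h, if_pos h, if_neg (not_le.mpr h)]; ring
  · rw [psiTerm, if_neg h, if_neg h, if_pos (not_lt.mp h), one_div, mul_inv]; ring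

lemma exp_half_mul_log {lam : ℝ} (h0 : 0 < lam) : exp (1 / 2 * log lam) = √lam := by
  rw [sqrt_eq_rpow, rpow_def_of_pos h0]
  ring_nf

lemma mul_exp_neg_half_mul_log {lam : ℝ} (h0 : 0 < lam) :
    lam * exp (-(1 / 2 * log lam)) = √lam := by
  rw [exp_neg, exp_half_mul_log h0, ← div_eq_mul_inv, div_sqrt]

lemma psiTerm_half_mul_log_add {lam y : ℝ} (h0 : 0 < lam) (hy : 0 ≤ y) :
    psiTerm lam (1 / 2 * log lam + y) = 2 * √lam / (1 + lam) * ((exp (-y) + exp y) / 2) := by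
  have h : ¬ 1 / 2 * log lam + y < 1 / 2 * log lam := by linarith
  rw [psiTerm, if_neg h, neg_add, exp_add, exp_add, ← mul_assoc,
    mul_exp_neg_half_mul_log h0, exp_half_mul_log h0]
  ring

lemma psiTerm_max_half_mul_log {lam : ℝ} (h0 : 0 < lam) (t : ℝ) :
    psiTerm lam (max t (1 / 2 * log lam)) = psiTerm lam t := by
  rcases le_or_gt (1 / 2 * log lam) t with h | h
  · rw [max_eq_left h]
  · simp only [max_eq_right h.le, psiTerm, if_pos h, lt_irrefl, if_false,
      mul_exp_neg_half_mul_log h0, exp_half_mul_log h0]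
    ring

lemma psi_max_half_mul_log (d : ℕ) {lam : ℝ} (h0 : 0 < lam) (s : Fin d → ℝ) :
    psi d lam (fun i => max (s i) (1 / 2 * log lam)) = psi d lam s := by
  simp only [psi_eq_sum_psiTerm_div, psiTerm_max_half_mul_log h0]

lemma psi_half_mul_log_add (d : ℕ) {lam : ℝ} (h0 : 0 < lam) {y : Fin d → ℝ}
    (hy : ∀ i, 0 ≤ y i) :
    psi d lam (fun i => 1 / 2 * log lam + y i)
      = 2 * √lam / (1 + lam) * ((1 / (2 * d)) * ∑ i, (exp (-(y i)) + exp (y i))) := by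
  simp only [psi_eq_sum_psiTerm_div, psiTerm_half_mul_log_add h0 (hy _), ← Finset.mul_sum,
    ← Finset.sum_div]
  ring

lemma sum_mul_le_log_sum_exp_neg_add_exp {ι : Type*} [Fintype ι] [Nonempty ι] {x y : ι → ℝ}
    (hx : ∀ i, 0 ≤ x i) (hsum : ∑ i, x i ≤ 1) (hy : ∀ i, 0 ≤ y i) :
    ∑ i, y i * x i ≤ log (∑ i, (exp (-(y i)) + exp (y i))) := by
  obtain ⟨j, -, hj⟩ := Finset.exists_max_image Finset.univ y Finset.univ_nonempty
  have hexp : exp (y j) ≤ ∑ i, (exp (-(y i)) + exp (y i)) :=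
    (le_add_of_nonneg_left (exp_pos _).le).trans
      (Finset.single_le_sum (f := fun i => exp (-(y i)) + exp (y i))
        (fun i _ => by positivity) (Finset.mem_univ j))
  calc ∑ i, y i * x i ≤ ∑ i, y j * x i :=
        Finset.sum_le_sum fun i _ => mul_le_mul_of_nonneg_right (hj i (Finset.mem_univ i)) (hx i)
    _ = y j * ∑ i, x i := (Finset.mul_sum _ _ _).symm
    _ ≤ y j := mul_le_of_le_one_right (hy j) hsum
    _ = log (exp (y j)) := (log_exp _).symm
    _ ≤ log (∑ i, (exp (-(y i)) + exp (y i))) := log_le_log (exp_pos _) hexp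

lemma csSup_eq_const_add_csSup {A B : Set ℝ} {c : ℝ} (hne : B.Nonempty) (hbdd : BddAbove B)
    (hBA : ∀ b ∈ B, c + b ∈ A) (hAB : ∀ a ∈ A, ∃ b ∈ B, a ≤ c + b) :
    sSup A = c + sSup B := by
  rw [← OrderIso.addLeft_apply c, OrderIso.map_csSup' _ hne hbdd]
  refine csSup_eq_csSup_of_forall_exists_le (fun a ha => ?_) ?_
  · obtain ⟨b, hb, hab⟩ := hAB a ha
    exact ⟨c + b, ⟨b, hb, rfl⟩, hab⟩
  · rintro _ ⟨b, hb, rfl⟩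
    exact ⟨c + b, hBA b hb, le_rfl⟩

theorem stmt17_general (d : ℕ) (hd : 1 ≤ d) (lam : ℝ) (h0 : 0 < lam)
    (x : Fin d → ℝ) (hx : ∀ i, 0 ≤ x i) (hsum : ∑ i, x i ≤ 1) :
    sSup {v : ℝ | ∃ s : Fin d → ℝ, v = ∑ i, s i * x i - Real.log (psi d lam s)}
      = (1 / 2) * (∑ i, x i) * Real.log lam
        - Real.log (2 * Real.sqrt lam / (1 + lam))
        + sSup {v : ℝ | ∃ y : Fin d → ℝ, (∀ i, 0 ≤ y i) ∧
            v = ∑ i, y i * x i -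
              Real.log ((1 / (2 * d)) * ∑ i, (Real.exp (-(y i)) + Real.exp (y i)))} := by
  have : Nonempty (Fin d) := ⟨⟨0, hd⟩⟩
  have hρ : 0 < 2 * √lam / (1 + lam) := by have := sqrt_pos.mpr h0; positivity
  have hS (y : Fin d → ℝ) : 0 < ∑ i, (exp (-(y i)) + exp (y i)) :=
    Finset.sum_pos (fun i _ => by positivity) Finset.univ_nonempty
  have hshift (y : Fin d → ℝ) (hy : ∀ i, 0 ≤ y i) :
      ∑ i, (1 / 2 * log lam + y i) * x i - log (psi d lam (fun i => 1 / 2 * log lam + y i))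
        = 1 / 2 * (∑ i, x i) * log lam - log (2 * √lam / (1 + lam)) + (∑ i, y i * x i -
            log ((1 / (2 * d)) * ∑ i, (exp (-(y i)) + exp (y i)))) := by
    rw [psi_half_mul_log_add d h0 hy, log_mul hρ.ne' (mul_pos (by positivity) (hS y)).ne']
    simp only [add_mul, Finset.sum_add_distrib, ← Finset.mul_sum]
    ring
  refine csSup_eq_const_add_csSup ⟨_, 0, fun _ => le_rfl, rfl⟩ ⟨log (2 * d), ?_⟩ ?_ ?_
  · rintro _ ⟨y, hy, rfl⟩
    rw [log_mul (by positivity) (hS y).ne', one_div, log_inv]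
    linarith [sum_mul_le_log_sum_exp_neg_add_exp hx hsum hy]
  · rintro _ ⟨y, hy, rfl⟩
    exact ⟨_, (hshift y hy).symm⟩
  · rintro _ ⟨s, rfl⟩
    have hy i : 0 ≤ max (s i) (1 / 2 * log lam) - 1 / 2 * log lam := by simp
    refine ⟨_, ⟨_, hy, rfl⟩, ?_⟩
    rw [← hshift _ hy]
    simp only [add_sub_cancel, psi_max_half_mul_log d h0]
    gcongr with i
    exacts [hx i, le_max_left _ _]

theorem stmt17 (d : ℕ) (hd : 1 ≤ d) (lam : ℝ) (h0 : 0 < lam) (h1 : lam < 1)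
    (x : Fin d → ℝ) (hx : ∀ i, 0 ≤ x i) (hsum : ∑ i, x i ≤ 1) :
    sSup {v : ℝ | ∃ s : Fin d → ℝ, v = ∑ i, s i * x i - Real.log (psi d lam s)}
      = (1 / 2) * (∑ i, x i) * Real.log lam
        - Real.log (2 * Real.sqrt lam / (1 + lam))
        + sSup {v : ℝ | ∃ y : Fin d → ℝ, (∀ i, 0 ≤ y i) ∧
            v = ∑ i, y i * x i -
              Real.log ((1 / (2 * d)) * ∑ i, (Real.exp (-(y i)) + Real.exp (y i)))} :=
  stmt17_general d hd lam h0 x hx hsum
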